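/- Let A be an associative algebra and V a vector space with linear maps ▷: A⊗V→V, ◁: V⊗A→V, θ: A⊗A→V, and a multiplication on V. Then E = A #_θ V with multiplication (a,x)(b,y) = (ab, xy + x◁b + a▷y + θ(a,b)) is an associative algebra if and only if conditions (A1)–(A8) hold: (A1) (ab)▷x + θ(a,b)x = a▷(b▷x); (A2) x◁(ab) + xθ(a,b) = (x◁a)◁b; (A3) (a▷x)◁b = a▷(x◁b); (A4) a▷(xy) = (a▷x)y; (A5) (xy)◁a = x(y◁a); (A6) (x◁a)y = x(a▷y); (A7) θ(ab,c) + θ(a,b)◁c = a▷θ(b,c) + θ(a,bc); (A8) the multiplication on V is associative. -/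
import Mathlib


open TensorProduct BigOperators

section
variable {k A V : Type*} [Field k]
  [NonUnitalRing A] [Module k A] [AddCommGroup V] [Module k V]

/-- The type (a1) unified product multiplication on `A ⊕ V`:
`(a,x)(b,y) = (ab, xy + x◁b + a▷y + θ(a,b))`. -/
def unifiedMulA1 (mV : V →ₗ[k] V →ₗ[k] V)
    (l : A →ₗ[k] V →ₗ[k] V) (rr : V →ₗ[k] A →ₗ[k] V)
    (θ : A →ₗ[k] A →ₗ[k] V) : (A × V) → (A × V) → (A × V) := fun p q =>
  (p.1 * q.1, mV p.2 q.2 + rr p.2 q.1 + l p.1 q.2 + θ p.1 q.1)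

/-- `A #_θ V` is an associative algebra if and only if conditions (A1)–(A8) hold. -/
theorem stmt10 (mV : V →ₗ[k] V →ₗ[k] V)
    (l : A →ₗ[k] V →ₗ[k] V) (rr : V →ₗ[k] A →ₗ[k] V)
    (θ : A →ₗ[k] A →ₗ[k] V) :
    (∀ p q r : A × V,
        unifiedMulA1 mV l rr θ (unifiedMulA1 mV l rr θ p q) r
          = unifiedMulA1 mV l rr θ p (unifiedMulA1 mV l rr θ q r))
    ↔ ((∀ (a b : A) (x : V), l (a * b) x + mV (θ a b) x = l a (l b x))       -- (A1)
      ∧ (∀ (x : V) (a b : A), rr x (a * b) + mV x (θ a b) = rr (rr x a) b)   -- (A2)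
      ∧ (∀ (a : A) (x : V) (b : A), rr (l a x) b = l a (rr x b))             -- (A3)
      ∧ (∀ (a : A) (x y : V), l a (mV x y) = mV (l a x) y)                   -- (A4)
      ∧ (∀ (x y : V) (a : A), rr (mV x y) a = mV x (rr y a))                 -- (A5)
      ∧ (∀ (x : V) (a : A) (y : V), mV (rr x a) y = mV x (l a y))            -- (A6)
      ∧ (∀ a b c : A, θ (a * b) c + rr (θ a b) c = l a (θ b c) + θ a (b * c)) -- (A7)
      ∧ (∀ x y z : V, mV (mV x y) z = mV x (mV y z))) := by                  -- (A8)
  constructor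
  · intro H
    have hs : ∀ p q r : A × V,
        (unifiedMulA1 mV l rr θ (unifiedMulA1 mV l rr θ p q) r).2
          = (unifiedMulA1 mV l rr θ p (unifiedMulA1 mV l rr θ q r)).2 :=
      fun p q r => congrArg Prod.snd (H p q r)
    refine ⟨?_, ?_, ?_, ?_, ?_, ?_, ?_, ?_⟩
    · intro a b x
      have := hs (a, 0) (b, 0) (0, x)
      simpa [unifiedMulA1, add_comm] using this
    · intro x a b
      have := hs (0, x) (a, 0) (b, 0)
      simpa [unifiedMulA1, add_comm, eq_comm] using this
    · intro a x b
      have := hs (a, 0) (0, x) (b, 0)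
      simpa [unifiedMulA1] using this
    · intro a x y
      have := hs (a, 0) (0, x) (0, y)
      simpa [unifiedMulA1, eq_comm] using this
    · intro x y a
      have := hs (0, x) (0, y) (a, 0)
      simpa [unifiedMulA1] using this
    · intro x a y
      have := hs (0, x) (a, 0) (0, y)
      simpa [unifiedMulA1] using this
    · intro a b c
      have := hs (a, 0) (b, 0) (c, 0)
      simpa [unifiedMulA1, add_comm] using this
    · intro x y z
      have := hs (0, x) (0, y) (0, z)
      simpa [unifiedMulA1] using this
  · rintro ⟨h1, h2, h3, h4, h5, h6, h7, h8⟩ ⟨a, x⟩ ⟨b, y⟩ ⟨c, z⟩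
    have h1' : ∀ (a b : A) (z : V), l (a * b) z = l a (l b z) - mV (θ a b) z := by
      intro a b z; rw [← h1]; abel
    have h2' : ∀ (x : V) (b c : A), rr x (b * c) = rr (rr x b) c - mV x (θ b c) := by
      intro x b c; rw [← h2]; abel
    have h7' : ∀ a b c : A, θ (a * b) c = l a (θ b c) + θ a (b * c) - rr (θ a b) c := by
      intro a b c; rw [← h7]; abel
    refine Prod.ext (mul_assoc a b c) ?_
    simp only [unifiedMulA1, map_add, LinearMap.add_apply]
    rw [h8, h6, h4, h5, h3, h1', h2', h7']
    abel

end
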